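/- arXiv:1610.02432 — 5 statements merged into one kernel-verified Lean document; each statement's English description precedes it below -/
import Mathlib

section
/- Let A ∈ ℝ^{n×n}, B ∈ ℝ^{n×m}, C ∈ ℝ^{p×n}, and assume the rational matrix function S(s) = C(sI − A)⁻¹B has all of its poles in the open left half complex plane (i.e., S extends to a matrix-valued function analytic on the closed right half-plane {s : Re s ≥ 0}). If there exists a symmetric matrix X ∈ ℝ^{p×p} such that CA = XC, then sup_{ω∈ℝ} σ_max(S(iω)) = σ_max(S(0)), where σ_max denotes the largest singular value. -/
open Matrix Filter Topology Function
open scoped Kronecker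

noncomputable section

/-- Complexification of a real matrix. -/
def cplx {α β : Type*} (M : Matrix α β ℝ) : Matrix α β ℂ := M.map Complex.ofReal

/-- Transfer function `S(s) = C (sI - A)⁻¹ B` of the system `ẋ = Ax + Bu, y = Cx`. -/
def transfer {n m p : ℕ} (A : Matrix (Fin n) (Fin n) ℝ) (B : Matrix (Fin n) (Fin m) ℝ)
    (C : Matrix (Fin p) (Fin n) ℝ) (s : ℂ) : Matrix (Fin p) (Fin m) ℂ :=
  cplx C * (s • (1 : Matrix (Fin n) (Fin n) ℂ) - cplx A)⁻¹ * cplx B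

/-- Squared H₂-norm: `(1/2π) ∫ tr(S(-iω)ᵀ S(iω)) dω`. -/
def H2normSq {α β : Type*} [Fintype α] [Fintype β] (S : ℂ → Matrix α β ℂ) : ℝ :=
  (1 / (2 * Real.pi)) *
    ∫ ω : ℝ, ((S (-((ω : ℂ) * Complex.I)))ᵀ * S ((ω : ℂ) * Complex.I)).trace.re

/-- Largest singular value of a complex matrix (its ℓ²-operator norm). -/
def sigmaMax {α β : Type*} [Fintype α] [Fintype β] [DecidableEq β] (M : Matrix α β ℂ) : ℝ :=
  ‖LinearMap.toContinuousLinearMap (Matrix.toEuclideanLin M)‖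

/-- Smallest singular value of a complex matrix: `√(λ_min(Mᴴ M))`. -/
def sigmaMinC {α β : Type*} [Fintype α] [Fintype β] [DecidableEq β] (M : Matrix α β ℂ) : ℝ :=
  Real.sqrt (sInf (spectrum ℝ (Mᴴ * M)))

/-- H∞-norm: `sup_{ω ∈ ℝ} σ_max(S(iω))`. -/
def HinfNorm {α β : Type*} [Fintype α] [Fintype β] [DecidableEq β] (S : ℂ → Matrix α β ℂ) : ℝ :=
  ⨆ ω : ℝ, sigmaMax (S ((ω : ℂ) * Complex.I))

/-- Generalized unstable subspace `X₊(A)`: direct sum of the generalized eigenspaces of (the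
complexification of) `A` corresponding to eigenvalues with nonnegative real part. -/
def unstableSubspace {n : ℕ} (A : Matrix (Fin n) (Fin n) ℝ) : Submodule ℂ (Fin n → ℂ) :=
  ⨆ μ ∈ {μ : ℂ | 0 ≤ μ.re}, Module.End.maxGenEigenspace (Matrix.toLin' (cplx A)) μ

/-- A complex square matrix is Hurwitz if all its eigenvalues have negative real part. -/
def IsHurwitz {n : ℕ} (M : Matrix (Fin n) (Fin n) ℂ) : Prop :=
  ∀ μ ∈ spectrum ℂ M, μ.re < 0

/-- Transfer function `S_λ(s) = λ (sI - A + λB)⁻¹ E` of the auxiliary system. -/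
def auxS {n r : ℕ} (A B : Matrix (Fin n) (Fin n) ℝ) (E : Matrix (Fin n) (Fin r) ℝ)
    (lam : ℝ) (s : ℂ) : Matrix (Fin n) (Fin r) ℂ :=
  (lam : ℂ) • ((s • (1 : Matrix (Fin n) (Fin n) ℂ) - cplx A + (lam : ℂ) • cplx B)⁻¹ * cplx E)

/-- Transfer function `S(s) = (L⊗Iₙ)(sI - I_N⊗A + L⊗B)⁻¹(M⊗E)` of the original network. -/
def netS {N n r m : ℕ} (L : Matrix (Fin N) (Fin N) ℝ) (A B : Matrix (Fin n) (Fin n) ℝ)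
    (E : Matrix (Fin n) (Fin r) ℝ) (M : Matrix (Fin N) (Fin m) ℝ) (s : ℂ) :
    Matrix (Fin N × Fin n) (Fin m × Fin r) ℂ :=
  cplx (L ⊗ₖ (1 : Matrix (Fin n) (Fin n) ℝ)) *
    (s • (1 : Matrix (Fin N × Fin n) (Fin N × Fin n) ℂ) -
      cplx ((1 : Matrix (Fin N) (Fin N) ℝ) ⊗ₖ A - L ⊗ₖ B))⁻¹ *
    cplx (M ⊗ₖ E)

/-- Transfer function `Ŝ(s) = (LP⊗Iₙ)(sI - I_k⊗A + L̂⊗B)⁻¹(M̂⊗E)` of the reduced network. -/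
def netShat {N n r m k : ℕ} (L : Matrix (Fin N) (Fin N) ℝ) (P : Matrix (Fin N) (Fin k) ℝ)
    (Lhat : Matrix (Fin k) (Fin k) ℝ) (Mhat : Matrix (Fin k) (Fin m) ℝ)
    (A B : Matrix (Fin n) (Fin n) ℝ) (E : Matrix (Fin n) (Fin r) ℝ) (s : ℂ) :
    Matrix (Fin N × Fin n) (Fin m × Fin r) ℂ :=
  cplx ((L * P) ⊗ₖ (1 : Matrix (Fin n) (Fin n) ℝ)) *
    (s • (1 : Matrix (Fin k × Fin n) (Fin k × Fin n) ℂ) -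
      cplx ((1 : Matrix (Fin k) (Fin k) ℝ) ⊗ₖ A - Lhat ⊗ₖ B))⁻¹ *
    cplx (Mhat ⊗ₖ E)

/-- Transfer function `S(s) = L (sI + L)⁻¹ M` of the single-integrator network. -/
def singleS {N m : ℕ} (L : Matrix (Fin N) (Fin N) ℝ) (M : Matrix (Fin N) (Fin m) ℝ)
    (s : ℂ) : Matrix (Fin N) (Fin m) ℂ :=
  cplx L * (s • (1 : Matrix (Fin N) (Fin N) ℂ) + cplx L)⁻¹ * cplx M

/-- Transfer function `Ŝ(s) = LP (sI + L̂)⁻¹ M̂` of the reduced single-integrator network. -/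
def singleShat {N m k : ℕ} (L : Matrix (Fin N) (Fin N) ℝ) (P : Matrix (Fin N) (Fin k) ℝ)
    (Lhat : Matrix (Fin k) (Fin k) ℝ) (Mhat : Matrix (Fin k) (Fin m) ℝ) (s : ℂ) :
    Matrix (Fin N) (Fin m) ℂ :=
  cplx (L * P) * (s • (1 : Matrix (Fin k) (Fin k) ℂ) + cplx Lhat)⁻¹ * cplx Mhat

/-- Squared Frobenius norm `‖M‖_F² = tr(MᵀM)`. -/
def frobSq {α β : Type*} [Fintype α] [Fintype β] (M : Matrix α β ℝ) : ℝ := (Mᵀ * M).trace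

end


/-!
Diagonalise the symmetric `X` by an orthonormal basis of left eigenvectors `w_k X = λ_k w_k`.
From `CA = XC` one gets `w_k C (sI - A) = (s - λ_k) w_k C`, so every mode of the transfer
function is a single simple pole: `w_k S(s) = (s - λ_k)⁻¹ w_k CB`. Analyticity on the closed right
half-plane forces `w_k CB = 0` whenever `λ_k ≥ 0`, and for `λ_k < 0`, `Re s ≥ 0` we have
`|s - λ_k| ≥ |λ_k|`. So each coordinate of `S(s) x` in the basis `w_k` is dominated by the
corresponding coordinate of `S(0) x`, whence `σ_max(S(s)) ≤ σ_max(S(0))` on the closed right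
half-plane.
-/

theorem ContinuousAt.eq_of_eq_off_finite {X Y : Type*} [TopologicalSpace X] [T1Space X]
    [TopologicalSpace Y] [T2Space Y] {f g : X → Y} {F : Set X} {s : X} [(𝓝[≠] s).NeBot]
    (hF : F.Finite) (hf : ContinuousAt f s) (hg : ContinuousAt g s) (h : ∀ z ∉ F, f z = g z) :
    f s = g s := by
  have hfg : f =ᶠ[𝓝[≠] s] g :=
    nhdsNE_le_cofinite s (Filter.mem_of_superset hF.compl_mem_cofinite fun z hz => h z hz)
  exact tendsto_nhds_unique (hf.tendsto.mono_left nhdsWithin_le_nhds)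
    ((hg.tendsto.mono_left nhdsWithin_le_nhds).congr' hfg.symm)

section SimplePole

variable {E : Type*} [NormedAddCommGroup E] [NormedSpace ℂ E] {f : ℂ → E} {F : Set ℂ}
  {μ : ℂ} {c : E}

theorem eq_zero_of_continuousAt_of_eq_inv_sub_smul (hF : F.Finite)
    (hf : ∀ z ∉ F, f z = (z - μ)⁻¹ • c) (hμ : ContinuousAt f μ) : c = 0 := by
  have key := ContinuousAt.eq_of_eq_off_finite (f := fun z => (z - μ) • f z) (g := fun _ => c)
    (hF.union (Set.finite_singleton μ)) ((continuousAt_id.sub continuousAt_const).smul hμ)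
    continuousAt_const fun z hz => by
      simp only [Set.mem_union, Set.mem_singleton_iff, not_or] at hz
      rw [hf z hz.1, smul_smul, mul_inv_cancel₀ (sub_ne_zero.2 hz.2), one_smul]
  simpa using key.symm

theorem eq_inv_sub_smul_of_continuousAt (hF : F.Finite) (hf : ∀ z ∉ F, f z = (z - μ)⁻¹ • c)
    {s : ℂ} (hs : ContinuousAt f s) (hsμ : s ≠ μ ∨ c = 0) : f s = (s - μ)⁻¹ • c := by
  refine ContinuousAt.eq_of_eq_off_finite hF hs ?_ hf
  rcases hsμ with hsμ | rfl
  · exact ((continuousAt_id.sub continuousAt_const).inv₀ (sub_ne_zero.2 hsμ)).smul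
      continuousAt_const
  · simpa using continuousAt_const

end SimplePole

theorem Matrix.vecMul_mul_inv_sub_of_mul_eq_mul {K ι κ : Type*} [Field K] [Fintype ι]
    [DecidableEq ι] [Fintype κ] {C : Matrix κ ι K} {A : Matrix ι ι K} {X : Matrix κ κ K}
    (hXC : C * A = X * C) {w : κ → K} {μ : K} (hw : w ᵥ* X = μ • w) {s : K}
    (hs : IsUnit (s • 1 - A)) : w ᵥ* (C * (s • 1 - A)⁻¹) = (s - μ)⁻¹ • (w ᵥ* C) := by
  set v := w ᵥ* C
  have hv : v ᵥ* (s • 1 - A) = (s - μ) • v := by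
    rw [vecMul_sub, vecMul_smul, vecMul_one, vecMul_vecMul, hXC, ← vecMul_vecMul, hw,
      smul_vecMul, sub_smul]
  have hinv : v = (s - μ) • (v ᵥ* (s • 1 - A)⁻¹) := by
    rw [← smul_vecMul, ← hv, vecMul_vecMul, mul_nonsing_inv _ ((isUnit_iff_isUnit_det _).1 hs),
      vecMul_one]
  rw [← vecMul_vecMul]
  change v ᵥ* _ = _ • v
  rcases eq_or_ne s μ with rfl | hsμ
  · rw [sub_self, zero_smul] at hinv
    simp [hinv]
  · conv_rhs => rw [hinv, smul_smul, inv_mul_cancel₀ (sub_ne_zero.2 hsμ), one_smul]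

theorem cplx_mul {α β γ : Type*} [Fintype β] (M : Matrix α β ℝ) (N : Matrix β γ ℝ) :
    cplx (M * N) = cplx M * cplx N :=
  Matrix.map_mul (f := Complex.ofRealHom)

theorem vecMul_transfer {n m p : ℕ} {A : Matrix (Fin n) (Fin n) ℝ} {B : Matrix (Fin n) (Fin m) ℝ}
    {C : Matrix (Fin p) (Fin n) ℝ} {X : Matrix (Fin p) (Fin p) ℝ} (hXC : C * A = X * C)
    {w : Fin p → ℂ} {μ : ℂ} (hw : w ᵥ* cplx X = μ • w) {s : ℂ}
    (hs : IsUnit (s • (1 : Matrix (Fin n) (Fin n) ℂ) - cplx A)) :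
    w ᵥ* transfer A B C s = (s - μ)⁻¹ • (w ᵥ* cplx (C * B)) := by
  have hXC' : cplx C * cplx A = cplx X * cplx C := by rw [← cplx_mul, ← cplx_mul, hXC]
  rw [transfer, ← vecMul_vecMul, Matrix.vecMul_mul_inv_sub_of_mul_eq_mul hXC' hw hs,
    smul_vecMul, vecMul_vecMul, cplx_mul]

theorem Matrix.IsHermitian.star_eigenvectorBasis_vecMul {𝕜 n : Type*} [RCLike 𝕜] [Fintype n]
    [DecidableEq n] {H : Matrix n n 𝕜} (hH : H.IsHermitian) (j : n) :
    star ⇑(hH.eigenvectorBasis j) ᵥ* H =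
      (hH.eigenvalues j : 𝕜) • star ⇑(hH.eigenvectorBasis j) := by
  have h := congrArg star (hH.mulVec_eigenvectorBasis j)
  rwa [star_mulVec, hH.eq, star_smul, RCLike.real_smul_eq_coe_smul (K := 𝕜)] at h

theorem Matrix.inner_toEuclideanLin {𝕜 α β : Type*} [RCLike 𝕜] [Fintype α] [Fintype β]
    [DecidableEq β] (M : Matrix α β 𝕜) (v : EuclideanSpace 𝕜 α) (x : EuclideanSpace 𝕜 β) :
    inner 𝕜 v (toEuclideanLin M x) = (star ⇑v ᵥ* M) ⬝ᵥ ⇑x := by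
  rw [EuclideanSpace.inner_eq_star_dotProduct, Matrix.ofLp_toLpLin, toLin'_apply,
    dotProduct_comm, dotProduct_mulVec]

theorem OrthonormalBasis.norm_le_norm_of_forall_norm_inner_le {ι 𝕜 E : Type*} [Fintype ι]
    [RCLike 𝕜] [NormedAddCommGroup E] [InnerProductSpace 𝕜 E] (b : OrthonormalBasis ι 𝕜 E)
    {x y : E} (h : ∀ i, ‖inner 𝕜 (b i) x‖ ≤ ‖inner 𝕜 (b i) y‖) : ‖x‖ ≤ ‖y‖ := by
  refine (pow_le_pow_iff_left₀ (norm_nonneg x) (norm_nonneg y) two_ne_zero).1 ?_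
  rw [← b.sum_sq_norm_inner_right, ← b.sum_sq_norm_inner_right]
  exact Finset.sum_le_sum fun i _ => pow_le_pow_left₀ (norm_nonneg _) (h i) 2

theorem sigmaMax_le_of_forall_norm_le {α β : Type*} [Fintype α] [Fintype β] [DecidableEq β]
    {M N : Matrix α β ℂ} (h : ∀ x, ‖toEuclideanLin M x‖ ≤ ‖toEuclideanLin N x‖) :
    sigmaMax M ≤ sigmaMax N :=
  ContinuousLinearMap.opNorm_le_bound _ (norm_nonneg _) fun x =>
    (h x).trans ((LinearMap.toContinuousLinearMap (toEuclideanLin N)).le_opNorm x)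

theorem norm_inv_sub_ofReal_le {s : ℂ} (hs : 0 ≤ s.re) {μ : ℝ} (hμ : μ < 0) :
    ‖(s - μ)⁻¹‖ ≤ ‖(0 - (μ : ℂ))⁻¹‖ := by
  rw [norm_inv, norm_inv, zero_sub, norm_neg, Complex.norm_real, Real.norm_of_nonpos hμ.le]
  refine inv_anti₀ (neg_pos.2 hμ) ?_
  calc -μ ≤ (s - μ).re := by simpa using hs
    _ ≤ ‖s - μ‖ := Complex.re_le_norm _

theorem sigmaMax_le_sigmaMax_zero_of_vecMul_eq_inv_sub_smul {ι κ : Type*} [Fintype ι]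
    [Fintype κ] [DecidableEq κ] {T : ℂ → Matrix ι κ ℂ}
    (b : OrthonormalBasis ι ℂ (EuclideanSpace ℂ ι)) {μ : ι → ℝ} {c : ι → κ → ℂ}
    (hc : ∀ k, μ k < 0 ∨ c k = 0)
    (hT : ∀ k s, 0 ≤ s.re → star ⇑(b k) ᵥ* T s = (s - μ k)⁻¹ • c k) {s : ℂ} (hs : 0 ≤ s.re) :
    sigmaMax (T s) ≤ sigmaMax (T 0) := by
  refine sigmaMax_le_of_forall_norm_le fun x => b.norm_le_norm_of_forall_norm_inner_le fun k => ?_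
  rw [Matrix.inner_toEuclideanLin, Matrix.inner_toEuclideanLin, hT k s hs, hT k 0 le_rfl,
    smul_dotProduct, smul_dotProduct, norm_smul, norm_smul]
  rcases hc k with hk | hk
  · exact mul_le_mul_of_nonneg_right (norm_inv_sub_ofReal_le hs hk) (norm_nonneg _)
  · simp [hk]

/-- if `S(s) = C(sI − A)⁻¹B` has all its poles in the open left half-plane
(i.e. it extends to a function `T` analytic on the closed right half-plane) and there is a
symmetric `X` with `CA = XC`, then `sup_ω σ_max(S(iω)) = σ_max(S(0))`. -/
theorem stmt2 {n m p : ℕ} (A : Matrix (Fin n) (Fin n) ℝ) (B : Matrix (Fin n) (Fin m) ℝ)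
    (C : Matrix (Fin p) (Fin n) ℝ)
    (T : ℂ → Matrix (Fin p) (Fin m) ℂ)
    (hTanalytic : ∀ s : ℂ, 0 ≤ s.re → ∀ i j, AnalyticAt ℂ (fun z => T z i j) s)
    (hTeq : ∀ s : ℂ, IsUnit (s • (1 : Matrix (Fin n) (Fin n) ℂ) - cplx A) →
      T s = transfer A B C s)
    (X : Matrix (Fin p) (Fin p) ℝ) (hXsymm : X.IsSymm) (hXC : C * A = X * C) :
    (⨆ ω : ℝ, sigmaMax (T ((ω : ℂ) * Complex.I))) = sigmaMax (T 0) := by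
  have hX : (cplx X).IsHermitian :=
    (isHermitian_iff_isSymm.2 hXsymm).map _ fun r => (Complex.conj_ofReal r).symm
  set b := hX.eigenvectorBasis
  set μ := hX.eigenvalues
  set c : Fin p → Fin m → ℂ := fun k => star ⇑(b k) ᵥ* cplx (C * B)
  have hcont : ∀ k s, 0 ≤ s.re → ContinuousAt (fun z => star ⇑(b k) ᵥ* T z) s := fun k s hs =>
    (continuous_const.matrix_vecMul continuous_id).continuousAt.comp
      (continuousAt_pi.2 fun i => continuousAt_pi.2 fun j => (hTanalytic s hs i j).continuousAt)
  have hpole : ∀ k, ∀ z ∉ spectrum ℂ (cplx A), star ⇑(b k) ᵥ* T z = (z - μ k)⁻¹ • c k :=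
    fun k z hz => by
      rw [spectrum.mem_iff, not_not, Algebra.algebraMap_eq_smul_one] at hz
      rw [hTeq z hz]
      exact vecMul_transfer hXC (hX.star_eigenvectorBasis_vecMul k) hz
  have hc : ∀ k, μ k < 0 ∨ c k = 0 := fun k =>
    (lt_or_ge (μ k) 0).imp_right fun hk =>
      eq_zero_of_continuousAt_of_eq_inv_sub_smul (Matrix.finite_spectrum _) (hpole k)
        (hcont k _ (by simpa using hk))
  have hmodes : ∀ k s, 0 ≤ s.re → star ⇑(b k) ᵥ* T s = (s - μ k)⁻¹ • c k := fun k s hs =>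
    eq_inv_sub_smul_of_continuousAt (Matrix.finite_spectrum _) (hpole k) (hcont k s hs)
      ((hc k).imp_left fun hk hsμ => by simp [hsμ] at hs; linarith)
  have hbound : ∀ ω : ℝ, sigmaMax (T ((ω : ℂ) * Complex.I)) ≤ sigmaMax (T 0) := fun ω =>
    sigmaMax_le_sigmaMax_zero_of_vecMul_eq_inv_sub_smul b hc hmodes (by simp)
  exact le_antisymm (ciSup_le hbound)
    (le_ciSup_of_le ⟨_, Set.forall_mem_range.2 hbound⟩ 0 (by simp))
end

section
/- Let A ∈ ℝ^{n×n} be symmetric, B ∈ ℝ^{n×m}, C ∈ ℝ^{p×n}, and assume ker A ⊆ ker C. Then s = 0 is a removable singularity of the rational matrix function S(s) = C(sI − A)⁻¹B, and its value at 0 (the limit of S(s) as s → 0 through points where sI − A is invertible) equals −CA⁺B, where A⁺ is the Moore–Penrose pseudoinverse of A. -/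
open Matrix Filter Topology Function
open scoped Kronecker

theorem cplx_neg {α β : Type*} (M : Matrix α β ℝ) : cplx (-M) = -cplx M :=
  Matrix.map_neg _ Complex.ofReal_neg M

namespace Matrix

variable {ι κ μ R : Type*} [Fintype ι]

section Inverse

variable [DecidableEq ι] [CommRing R]

theorem commute_nonsing_inv_right {E N : Matrix ι ι R} (h : Commute E N) : Commute E N⁻¹ := by
  by_cases hN : IsUnit N
  · obtain ⟨u, rfl⟩ := hN
    rw [← coe_units_inv]
    exact h.units_inv_right
  · rw [nonsing_inv_eq_ringInverse, Ring.inverse_non_unit _ hN]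
    exact Commute.zero_right E

theorem mul_nonsing_inv_mul_eq_zero {C : Matrix κ ι R} {E N : Matrix ι ι R} (hCE : C * E = 0)
    (hEN : Commute E N) : C * N⁻¹ * E = 0 := by
  rw [Matrix.mul_assoc, ← (commute_nonsing_inv_right hEN).eq, ← Matrix.mul_assoc, hCE,
    Matrix.zero_mul]

theorem mul_nonsing_inv_eq_of_add {C : Matrix κ ι R} {M E : Matrix ι ι R} (hM : IsUnit M)
    (hME : IsUnit (M + E)) (hCE : C * E = 0) (hEM : Commute E M) :
    C * M⁻¹ = C * (M + E)⁻¹ := by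
  have hleft : C * M⁻¹ * (M + E) = C := by
    rw [Matrix.mul_add, mul_nonsing_inv_mul_eq_zero hCE hEM, add_zero, Matrix.mul_assoc,
      nonsing_inv_mul M ((isUnit_iff_isUnit_det M).mp hM), Matrix.mul_one]
  calc C * M⁻¹ = C * M⁻¹ * ((M + E) * (M + E)⁻¹) := by
        rw [mul_nonsing_inv _ ((isUnit_iff_isUnit_det _).mp hME), Matrix.mul_one]
    _ = C * (M + E)⁻¹ := by rw [← Matrix.mul_assoc, hleft]

theorem mul_nonsing_inv_one_sub_mul_sub {a g : Matrix ι ι R} {c : Matrix κ ι R}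
    (hc : c * (a * g) = c) (hag : Commute (a * g) a) (hu : IsUnit (1 - a * g - a)) :
    c * (1 - a * g - a)⁻¹ = -(c * g) := by
  set e := 1 - a * g with he
  have hkill : c * (e - a)⁻¹ * e = 0 :=
    mul_nonsing_inv_mul_eq_zero (by rw [Matrix.mul_sub, Matrix.mul_one, hc, sub_self])
      ((Commute.refl e).sub_right ((Commute.one_left a).sub_left hag))
  have hright : (e - a) * -g = 1 - e - e * g := by
    simp only [he, Matrix.mul_neg, Matrix.sub_mul, Matrix.one_mul]
    abel
  calc c * (e - a)⁻¹ = c * (e - a)⁻¹ * (1 - e - e * g) := by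
        rw [Matrix.mul_sub, Matrix.mul_sub, Matrix.mul_one, hkill, ← Matrix.mul_assoc, hkill,
          Matrix.zero_mul, sub_zero, sub_zero]
    _ = -(c * g) := by
        rw [← hright, ← Matrix.mul_assoc, Matrix.mul_assoc c,
          nonsing_inv_mul _ ((isUnit_iff_isUnit_det _).mp hu), Matrix.mul_one, Matrix.mul_neg]

theorem mul_eq_self_of_ker_le {A X : Matrix ι ι R} {C : Matrix κ ι R}
    (hker : LinearMap.ker A.mulVecLin ≤ LinearMap.ker C.mulVecLin) (hX : A * X = A) :
    C * X = C := by
  suffices C * (X - 1) = 0 by rwa [Matrix.mul_sub, Matrix.mul_one, sub_eq_zero] at this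
  apply toLin'.injective
  rw [map_zero, toLin'_mul, ← LinearMap.range_le_ker_iff]
  refine le_trans ?_ hker
  rw [toLin'_apply', LinearMap.range_le_ker_iff, ← mulVecLin_mul, Matrix.mul_sub, hX,
    Matrix.mul_one, sub_self, mulVecLin_zero]

end Inverse

namespace IsSymm

variable [CommRing R] {A G : Matrix ι ι R}

theorem mul_mul_eq_self_of_penrose (hA : A.IsSymm) (h1 : A * G * A = A)
    (h3 : (A * G)ᵀ = A * G) : A * (A * G) = A := by
  have := congrArg (·ᵀ) h1
  rwa [transpose_mul, h3, hA.eq] at this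

theorem commute_mul_of_penrose (hA : A.IsSymm) (h1 : A * G * A = A)
    (h3 : (A * G)ᵀ = A * G) : Commute (A * G) A :=
  h1.trans (hA.mul_mul_eq_self_of_penrose h1 h3).symm

theorem isUnit_one_sub_mul_sub_of_penrose [DecidableEq ι] (hA : A.IsSymm) (h1 : A * G * A = A)
    (h3 : (A * G)ᵀ = A * G) : IsUnit (1 - A * G - A) := by
  set P := A * G with hP
  have hPA : P * A = A := h1
  have hPP : P * P = P := by rw [hP, ← Matrix.mul_assoc, h1]
  have hGA : Gᵀ * A = P := by
    have := congrArg (·ᵀ) h3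
    rw [transpose_transpose, transpose_mul, hA.eq] at this
    exact this.symm
  -- `P` is the orthogonal projection onto the range of `A`; `1 - P - Gᵀ P` is a left inverse
  refine IsUnit.of_mul_eq_one_right (1 - P - Gᵀ * P) ?_
  simp only [Matrix.sub_mul, Matrix.mul_sub, Matrix.one_mul, Matrix.mul_one, Matrix.mul_assoc,
    hPP, hPA, hGA]
  abel

end IsSymm

theorem tendsto_mul_resolvent_mul_nhdsWithin_zero {𝕜 : Type*} [NormedField 𝕜] [DecidableEq ι]
    [Fintype κ] {a g : Matrix ι ι 𝕜} (b : Matrix ι μ 𝕜) {c : Matrix κ ι 𝕜}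
    (hc : c * (a * g) = c) (hag : Commute (a * g) a) (hu : IsUnit (1 - a * g - a)) :
    Filter.Tendsto (fun s : 𝕜 => c * (s • (1 : Matrix ι ι 𝕜) - a)⁻¹ * b)
      (nhdsWithin 0 {s : 𝕜 | IsUnit (s • (1 : Matrix ι ι 𝕜) - a)}) (nhds (-(c * g * b))) := by
  set e := 1 - a * g with he
  set N : 𝕜 → Matrix ι ι 𝕜 := fun s => s • 1 - a + e with hN
  have hNcont : Continuous N := by fun_prop
  have hN0 : N 0 = 1 - a * g - a := by simp only [hN, he, zero_smul, zero_sub]; abel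
  have hdet0 : (N 0).det ≠ 0 := by
    rw [hN0]
    exact ((isUnit_iff_isUnit_det _).mp hu).ne_zero
  have hNunit : ∀ᶠ s in nhds 0, IsUnit (N s) := by
    filter_upwards [hNcont.matrix_det.continuousAt.eventually_ne hdet0] with s hs
    exact (isUnit_iff_isUnit_det _).mpr (isUnit_iff_ne_zero.mpr hs)
  have hinv : ContinuousAt (fun s => (N s)⁻¹) 0 := by
    refine (continuousAt_matrix_inv _ ?_).comp hNcont.continuousAt
    rw [Ring.inverse_eq_inv']
    exact continuousAt_inv₀ hdet0
  have hlim : Filter.Tendsto (fun s => c * (N s)⁻¹ * b) (nhds 0) (nhds (-(c * g * b))) := by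
    rw [← Matrix.neg_mul, ← mul_nonsing_inv_one_sub_mul_sub hc hag hu, ← hN0]
    exact ((continuous_const.matrix_mul continuous_id).matrix_mul
      continuous_const).continuousAt.comp hinv
  have hce : c * e = 0 := by rw [Matrix.mul_sub, Matrix.mul_one, hc, sub_self]
  have hea : Commute e a := (Commute.one_left a).sub_left hag
  refine (hlim.mono_left nhdsWithin_le_nhds).congr' ?_
  filter_upwards [mem_nhdsWithin_of_mem_nhds hNunit, self_mem_nhdsWithin] with s hNs hMs
  rw [mul_nonsing_inv_eq_of_add hMs hNs hce
    (((Commute.one_right e).smul_right s).sub_right hea)]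

end Matrix

theorem stmt3_general {n m p : ℕ} (A : Matrix (Fin n) (Fin n) ℝ) (hA : A.IsSymm)
    (B : Matrix (Fin n) (Fin m) ℝ) (C : Matrix (Fin p) (Fin n) ℝ)
    (hker : LinearMap.ker A.mulVecLin ≤ LinearMap.ker C.mulVecLin)
    (Ap : Matrix (Fin n) (Fin n) ℝ)
    (hAp1 : A * Ap * A = A)
    (hAp3 : (A * Ap)ᵀ = A * Ap) :
    ∀ i j, Filter.Tendsto (fun s : ℂ => transfer A B C s i j)
      (nhdsWithin 0 {s : ℂ | IsUnit (s • (1 : Matrix (Fin n) (Fin n) ℂ) - cplx A)})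
      (nhds (cplx (-(C * Ap * B)) i j)) := by
  let f := Complex.ofRealHom.mapMatrix (m := Fin n)
  have hf (M : Matrix (Fin n) (Fin n) ℝ) : f M = cplx M := rfl
  have hC : cplx C * (cplx A * cplx Ap) = cplx C := by
    rw [← cplx_mul, ← cplx_mul,
      mul_eq_self_of_ker_le hker (hA.mul_mul_eq_self_of_penrose hAp1 hAp3)]
  have hcomm : Commute (cplx A * cplx Ap) (cplx A) := by
    have := (hA.commute_mul_of_penrose hAp1 hAp3).map f
    rwa [map_mul, hf, hf] at this
  have hunit : IsUnit (1 - cplx A * cplx Ap - cplx A) := by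
    have := (hA.isUnit_one_sub_mul_sub_of_penrose hAp1 hAp3).map f
    rwa [map_sub, map_sub, map_one, map_mul, hf, hf] at this
  have hT := tendsto_mul_resolvent_mul_nhdsWithin_zero (cplx B) hC hcomm hunit
  intro i j
  rw [cplx_neg, cplx_mul, cplx_mul]
  exact (hT.apply_nhds i).apply_nhds j

/-- if `A` is symmetric and `ker A ⊆ ker C`, then `0` is a removable
singularity of `S(s) = C(sI − A)⁻¹B` and its value at `0` (the limit of `S(s)` as `s → 0`
through points where `sI − A` is invertible) is `−CA⁺B`, `A⁺` being the Moore–Penrose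
pseudoinverse of `A` (characterized by the four Penrose conditions). -/
theorem stmt3 {n m p : ℕ} (A : Matrix (Fin n) (Fin n) ℝ) (hA : A.IsSymm)
    (B : Matrix (Fin n) (Fin m) ℝ) (C : Matrix (Fin p) (Fin n) ℝ)
    (hker : LinearMap.ker A.mulVecLin ≤ LinearMap.ker C.mulVecLin)
    (Ap : Matrix (Fin n) (Fin n) ℝ)
    (hAp1 : A * Ap * A = A) (hAp2 : Ap * A * Ap = Ap)
    (hAp3 : (A * Ap)ᵀ = A * Ap) (hAp4 : (Ap * A)ᵀ = Ap * A) :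
    ∀ i j, Filter.Tendsto (fun s : ℂ => transfer A B C s i j)
      (nhdsWithin 0 {s : ℂ | IsUnit (s • (1 : Matrix (Fin n) (Fin n) ℂ) - cplx A)})
      (nhds (cplx (-(C * Ap * B)) i j)) :=
  stmt3_general A hA B C hker Ap hAp1 hAp3
end

section
/- Let G be a weighted undirected graph on node set {1,…,N} with symmetric adjacency matrix A = (a_{ij}), a_{ij} ≥ 0, a_{ii} = 0, and Laplacian L defined by L_{ii} = Σ_j a_{ij} and L_{ij} = −a_{ij} for i ≠ j. Let π = {C₁,…,C_k} be a partition of {1,…,N} with characteristic matrix P ∈ ℝ^{N×k}, where P_{ij} = 1 if i ∈ C_j and 0 otherwise. Then π is an almost equitable partition of G — i.e., for every pair p ≠ q, the degree d_{pq}(j) = Σ_{i∈C_p} a_{ij} is the same for all j ∈ C_q — if and only if the column space Im P is invariant under L, i.e., L(Im P) ⊆ Im P. -/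
open Matrix Filter Topology Function
open scoped Kronecker

/-!
For `x = y ∘ c` in `Im P`, symmetry of the weights turns the Laplacian into
`(L x)_j = ∑_p d_p(j) (y (c j) - y p)`, where `d_p(j)` is the weight from the cell `C_p` into `j`.
The summand `p = c j` vanishes, so an almost equitable partition makes `L x` constant on cells;
conversely, `y` the indicator of `C_p` gives `(L x)_j = -d_p(j)` for every `j ∉ C_p`.
-/

open Finset

section

variable {m n R : Type*} [Fintype n] [DecidableEq n] [CommRing R]

/-- The characteristic matrix of the partition whose cells are the fibres of `c`. -/
def partitionMatrix (c : m → n) : Matrix m n R := Matrix.of fun i j => if c i = j then 1 else 0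

theorem partitionMatrix_mulVec (c : m → n) (y : n → R) :
    (partitionMatrix c : Matrix m n R) *ᵥ y = y ∘ c := by
  ext i
  simp [partitionMatrix, Matrix.mulVec, dotProduct]

theorem mem_range_partitionMatrix_mulVecLin {c : m → n} {x : m → R} :
    x ∈ LinearMap.range (partitionMatrix c : Matrix m n R).mulVecLin ↔ x.FactorsThrough c := by
  simp only [LinearMap.mem_range, Matrix.mulVecLin_apply, partitionMatrix_mulVec]
  refine ⟨?_, fun hx => ⟨extend c x 0, funext (hx.extend_apply 0)⟩⟩
  rintro ⟨y, rfl⟩ i i' h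
  simp [h]

theorem map_mulVecLin_range_partitionMatrix_le_iff [Fintype m] (A : Matrix m m R) (c : m → n) :
    Submodule.map A.mulVecLin (LinearMap.range (partitionMatrix c : Matrix m n R).mulVecLin) ≤
        LinearMap.range (partitionMatrix c : Matrix m n R).mulVecLin ↔
      ∀ y : n → R, (A *ᵥ (y ∘ c)).FactorsThrough c := by
  simp only [← LinearMap.range_comp, LinearMap.range_le_iff_comap, Submodule.eq_top_iff',
    Submodule.mem_comap, LinearMap.comp_apply, Matrix.mulVecLin_apply, partitionMatrix_mulVec,
    mem_range_partitionMatrix_mulVecLin]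

end

section

variable {m n : Type*} [Fintype m] [DecidableEq m] [DecidableEq n]

def laplacian (a : m → m → ℝ) : Matrix m m ℝ :=
  Matrix.of fun i j => if i = j then ∑ l, a i l else -a i j

/-- The degree `d_{pq}(j)` of `j` with respect to the cell `C_p`, where `q = c j`. -/
def cellDegree (a : m → m → ℝ) (c : m → n) (p : n) (j : m) : ℝ :=
  ∑ i ∈ univ.filter fun i => c i = p, a i j

def IsAlmostEquitable (a : m → m → ℝ) (c : m → n) : Prop :=
  ∀ p q, p ≠ q → ∀ j₁ j₂, c j₁ = q → c j₂ = q → cellDegree a c p j₁ = cellDegree a c p j₂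

theorem laplacian_mulVec_apply {a : m → m → ℝ} (hdiag : ∀ i, a i i = 0) (x : m → ℝ) (j : m) :
    (laplacian a *ᵥ x) j = ∑ i, a j i * (x j - x i) := by
  have hterm : ∀ i, laplacian a j i * x i =
      (if j = i then (∑ l, a j l) * x i else 0) - a j i * x i := by
    intro i
    by_cases h : j = i <;> simp [laplacian, h, hdiag]
  simp only [Matrix.mulVec, dotProduct, hterm, sum_sub_distrib, sum_ite_eq, mem_univ, if_true,
    mul_sub, sum_mul]

theorem laplacian_mulVec_comp_apply [Fintype n] {a : m → m → ℝ} (hsym : ∀ i j, a i j = a j i)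
    (hdiag : ∀ i, a i i = 0) (c : m → n) (y : n → ℝ) (j : m) :
    (laplacian a *ᵥ (y ∘ c)) j = ∑ p, cellDegree a c p j * (y (c j) - y p) := by
  rw [laplacian_mulVec_apply hdiag, ← sum_fiberwise univ c]
  refine sum_congr rfl fun p _ => ?_
  rw [cellDegree, sum_mul]
  refine sum_congr rfl fun i hi => ?_
  rw [Function.comp_apply, Function.comp_apply, (mem_filter.1 hi).2, hsym]

theorem isAlmostEquitable_iff_forall_factorsThrough [Fintype n] {a : m → m → ℝ}
    (hsym : ∀ i j, a i j = a j i) (hdiag : ∀ i, a i i = 0) (c : m → n) :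
    IsAlmostEquitable a c ↔ ∀ y : n → ℝ, (laplacian a *ᵥ (y ∘ c)).FactorsThrough c := by
  constructor
  · intro h y j₁ j₂ hj
    simp only [laplacian_mulVec_comp_apply hsym hdiag, hj]
    refine sum_congr rfl fun p _ => ?_
    by_cases hp : p = c j₂
    · simp [hp]
    · rw [h p (c j₂) hp j₁ j₂ hj rfl]
  · intro h p q hpq j₁ j₂ h₁ h₂
    simpa [laplacian_mulVec_comp_apply hsym hdiag, h₁, h₂, Pi.single_apply, hpq.symm] using
      h (Pi.single p 1) (h₁.trans h₂.symm)

end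

theorem stmt4_general {N k : ℕ} (a : Fin N → Fin N → ℝ)
    (hsym : ∀ i j, a i j = a j i) (hdiag : ∀ i, a i i = 0)
    (L : Matrix (Fin N) (Fin N) ℝ)
    (hL : ∀ i j, L i j = if i = j then ∑ l, a i l else -(a i j))
    (c : Fin N → Fin k)
    (P : Matrix (Fin N) (Fin k) ℝ)
    (hP : P = Matrix.of fun i j => if c i = j then 1 else 0) :
    (∀ p q : Fin k, p ≠ q → ∀ j₁ j₂ : Fin N, c j₁ = q → c j₂ = q →
        (∑ i ∈ Finset.univ.filter fun i => c i = p, a i j₁) =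
        (∑ i ∈ Finset.univ.filter fun i => c i = p, a i j₂)) ↔
      Submodule.map L.mulVecLin (LinearMap.range P.mulVecLin) ≤
        LinearMap.range P.mulVecLin := by
  obtain rfl : L = laplacian a := Matrix.ext hL
  obtain rfl : P = partitionMatrix c := hP
  rw [map_mulVecLin_range_partitionMatrix_le_iff]
  exact isAlmostEquitable_iff_forall_factorsThrough hsym hdiag c

/-- a partition is almost equitable iff `Im P` is invariant under the
Laplacian `L`. -/
theorem stmt4 {N k : ℕ} (a : Fin N → Fin N → ℝ)
    (hsym : ∀ i j, a i j = a j i) (hnonneg : ∀ i j, 0 ≤ a i j) (hdiag : ∀ i, a i i = 0)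
    (L : Matrix (Fin N) (Fin N) ℝ)
    (hL : ∀ i j, L i j = if i = j then ∑ l, a i l else -(a i j))
    (c : Fin N → Fin k) (hc : Function.Surjective c)
    (P : Matrix (Fin N) (Fin k) ℝ)
    (hP : P = Matrix.of fun i j => if c i = j then 1 else 0) :
    (∀ p q : Fin k, p ≠ q → ∀ j₁ j₂ : Fin N, c j₁ = q → c j₂ = q →
        (∑ i ∈ Finset.univ.filter fun i => c i = p, a i j₁) =
        (∑ i ∈ Finset.univ.filter fun i => c i = p, a i j₂)) ↔
      Submodule.map L.mulVecLin (LinearMap.range P.mulVecLin) ≤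
        LinearMap.range P.mulVecLin :=
  stmt4_general a hsym hdiag L hL c P hP
end

section
/- Let L ∈ ℝ^{N×N} be symmetric positive semidefinite with L𝟙_N = 0, let π be a partition of {1,…,N} with characteristic matrix P ∈ ℝ^{N×k}, and let 𝒫 = P(PᵀP)⁻¹Pᵀ be the orthogonal projector onto Im P. Then L_AEP := 𝒫L𝒫 + (I_N − 𝒫)L(I_N − 𝒫) is the unique minimizer of ‖L − X‖²_F over all X ∈ ℝ^{N×N} satisfying: (i) (I_N − 𝒫)XP = 0, (ii) X = Xᵀ, (iii) X positive semidefinite, and (iv) X𝟙_N = 0. -/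
/-!
Pinching `M ↦ Q M Q + (1 - Q) M (1 - Q)` by a symmetric idempotent `Q` is an orthogonal
projection for the Frobenius inner product `tr (Aᵀ B)`, and `L_AEP` is the pinching of `L` by
`𝒫`. A symmetric `X` with `(1 - 𝒫) X P = 0` also has `(1 - 𝒫) X 𝒫 = 0` and, transposing,
`𝒫 X (1 - 𝒫) = 0`, so it is fixed by the pinching. Pythagoras then gives
`‖L - X‖² = ‖L - L_AEP‖² + ‖L_AEP - X‖²`. Feasibility of `L_AEP` is direct: congruence preserves
positive semidefiniteness, and `𝟙 ∈ Im P` gives `L_AEP 𝟙 = 𝒫 L 𝟙 = 0`.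
-/

open Matrix Filter Topology Function
open scoped Kronecker

section Frobenius

variable {α β : Type*} [Fintype α] [Fintype β]

lemma frobSq_pos {M : Matrix α β ℝ} (hM : M ≠ 0) : 0 < frobSq M := by
  rw [frobSq, ← conjTranspose_eq_transpose_of_trivial]
  exact (posSemidef_conjTranspose_mul_self M).trace_nonneg.lt_of_ne'
    (trace_conjTranspose_mul_self_eq_zero_iff.not.mpr hM)

lemma frobSq_add_of_trace_transpose_mul_eq_zero {A B : Matrix α β ℝ}
    (h : (Aᵀ * B).trace = 0) : frobSq (A + B) = frobSq A + frobSq B := by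
  have h' : (Bᵀ * A).trace = 0 := by
    rw [← trace_transpose, transpose_mul, transpose_transpose, h]
  simp only [frobSq, transpose_add, Matrix.add_mul, Matrix.mul_add, trace_add, h, h']
  ring

end Frobenius

def pinch {n R : Type*} [Fintype n] [DecidableEq n] [Ring R] (Q M : Matrix n n R) :
    Matrix n n R :=
  Q * M * Q + (1 - Q) * M * (1 - Q)

section Pinching

variable {n R : Type*} [Fintype n] [DecidableEq n] [CommRing R] {Q : Matrix n n R}

lemma pinch_sub (A B : Matrix n n R) : pinch Q (A - B) = pinch Q A - pinch Q B := by
  simp only [pinch, mul_sub, sub_mul]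
  abel

lemma pinch_pinch (hQ : IsIdempotentElem Q) (M : Matrix n n R) :
    pinch Q (pinch Q M) = pinch Q M := by
  have hR := hQ.one_sub
  have hQR : Q * (1 - Q) = 0 := by rw [mul_sub, mul_one, hQ.eq, sub_self]
  have hRQ : (1 - Q) * Q = 0 := by rw [sub_mul, one_mul, hQ.eq, sub_self]
  simp only [pinch, mul_add, add_mul, ← mul_assoc, hQ.eq, hR.eq, hQR, hRQ, zero_mul]
  simp only [mul_assoc, hQ.eq, hR.eq, add_zero, zero_add]

lemma trace_transpose_mul_pinch (hQ : Q.IsSymm) (A C : Matrix n n R) :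
    (Aᵀ * pinch Q C).trace = ((pinch Q A)ᵀ * C).trace := by
  have hR : (1 - Q).IsSymm := isSymm_one.sub hQ
  simp only [pinch, transpose_add, transpose_mul, hQ.eq, hR.eq, mul_add, add_mul, trace_add]
  congr 1 <;> rw [← mul_assoc, ← mul_assoc, trace_mul_cycle]

lemma pinch_isSymm (hQ : Q.IsSymm) {M : Matrix n n R} (hM : M.IsSymm) : (pinch Q M).IsSymm := by
  have hR : (1 - Q).IsSymm := isSymm_one.sub hQ
  simp only [IsSymm, pinch, transpose_add, transpose_mul, hQ.eq, hR.eq, hM.eq, mul_assoc]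

lemma pinch_eq_self (hQ : Q.IsSymm) {M : Matrix n n R}
    (hM : M.IsSymm) (h : (1 - Q) * M * Q = 0) : pinch Q M = M := by
  have h' : Q * M * (1 - Q) = 0 := by
    have hR : (1 - Q).IsSymm := isSymm_one.sub hQ
    simpa only [transpose_mul, hQ.eq, hR.eq, hM.eq, transpose_zero, mul_assoc] using
      congrArg transpose h
  calc pinch Q M = (Q + (1 - Q)) * M * (Q + (1 - Q)) - Q * M * (1 - Q) - (1 - Q) * M * Q := by
        simp only [pinch, Matrix.add_mul, Matrix.mul_add]; abel
    _ = M := by rw [h, h', add_sub_cancel, one_mul, mul_one, sub_zero, sub_zero]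

lemma one_sub_mul_pinch_mul {k : Type*} [Fintype k] {P : Matrix n k R}
    (hQ : IsIdempotentElem Q) (hP : Q * P = P) (M : Matrix n n R) :
    (1 - Q) * pinch Q M * P = 0 := by
  have hRP : (1 - Q) * P = 0 := by rw [Matrix.sub_mul, Matrix.one_mul, hP, sub_self]
  have hRQ : (1 - Q) * Q = 0 := by rw [sub_mul, one_mul, hQ.eq, sub_self]
  simp only [pinch, mul_add, ← mul_assoc, hRQ, hQ.one_sub.eq, zero_mul, zero_add]
  rw [Matrix.mul_assoc, hRP, Matrix.mul_zero]

lemma pinch_mulVec {v : n → R} (hv : Q *ᵥ v = v) (M : Matrix n n R) :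
    pinch Q M *ᵥ v = Q *ᵥ M *ᵥ v := by
  have hRv : (1 - Q) *ᵥ v = 0 := by rw [sub_mulVec, one_mulVec, hv, sub_self]
  simp only [pinch, add_mulVec, ← mulVec_mulVec, hv, hRv, mulVec_zero, add_zero]

end Pinching

lemma Matrix.PosSemidef.pinch {n : Type*} [Fintype n] [DecidableEq n] {Q M : Matrix n n ℝ}
    (hQ : Q.IsSymm) (hM : M.PosSemidef) : (pinch Q M).PosSemidef := by
  have hR : (1 - Q).IsSymm := isSymm_one.sub hQ
  have h := (hM.mul_mul_conjTranspose_same Q).add (hM.mul_mul_conjTranspose_same (1 - Q))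
  rwa [conjTranspose_eq_transpose_of_trivial, conjTranspose_eq_transpose_of_trivial, hQ.eq,
    hR.eq] at h

lemma frobSq_sub_eq_frobSq_sub_pinch_add {n : Type*} [Fintype n] [DecidableEq n]
    {Q L X : Matrix n n ℝ} (hQ : Q.IsSymm) (hQ' : IsIdempotentElem Q) (hX : pinch Q X = X) :
    frobSq (L - X) = frobSq (L - pinch Q L) + frobSq (pinch Q L - X) := by
  rw [← frobSq_add_of_trace_transpose_mul_eq_zero, sub_add_sub_cancel]
  rw [← hX, ← pinch_sub, trace_transpose_mul_pinch hQ, pinch_sub, pinch_pinch hQ', sub_self,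
    transpose_zero, Matrix.zero_mul, trace_zero]

noncomputable def orthogonalProjector {m k R : Type*} [Fintype m] [Fintype k] [DecidableEq k]
    [CommRing R] (P : Matrix m k R) : Matrix m m R :=
  P * (Pᵀ * P)⁻¹ * Pᵀ

section OrthogonalProjector

variable {m k R : Type*} [Fintype m] [Fintype k] [DecidableEq k] [CommRing R] {P : Matrix m k R}

lemma orthogonalProjector_mul_self (hP : IsUnit (Pᵀ * P)) : orthogonalProjector P * P = P := by
  rw [orthogonalProjector, Matrix.mul_assoc, Matrix.mul_assoc,
    nonsing_inv_mul _ ((isUnit_iff_isUnit_det _).mp hP), Matrix.mul_one]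

lemma isSymm_orthogonalProjector (P : Matrix m k R) : (orthogonalProjector P).IsSymm := by
  simp only [orthogonalProjector, IsSymm, transpose_mul, transpose_transpose,
    transpose_nonsing_inv, Matrix.mul_assoc]

lemma isIdempotentElem_orthogonalProjector (hP : IsUnit (Pᵀ * P)) :
    IsIdempotentElem (orthogonalProjector P) := by
  rw [IsIdempotentElem]
  nth_rw 2 [orthogonalProjector]
  rw [← Matrix.mul_assoc, ← Matrix.mul_assoc, orthogonalProjector_mul_self hP, orthogonalProjector]

lemma mul_orthogonalProjector_eq_zero {l : Type*} {A : Matrix l m R} (h : A * P = 0) :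
    A * orthogonalProjector P = 0 := by
  simp only [orthogonalProjector, ← Matrix.mul_assoc, h, Matrix.zero_mul]

end OrthogonalProjector

def charMatrix {m k R : Type*} [DecidableEq k] [Zero R] [One R] (c : m → k) : Matrix m k R :=
  of fun i j => if c i = j then 1 else 0

lemma charMatrix_mulVec {m k R : Type*} [Fintype k] [DecidableEq k] [NonAssocSemiring R]
    (c : m → k) (x : k → R) : charMatrix c *ᵥ x = x ∘ c := by
  ext i
  simp [charMatrix, mulVec, dotProduct]

lemma isUnit_transpose_mul_charMatrix {m k : Type*} [Fintype m] [Fintype k] [DecidableEq k]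
    {c : m → k} (hc : Surjective c) : IsUnit ((charMatrix c)ᵀ * charMatrix c : Matrix k k ℝ) := by
  rw [← conjTranspose_eq_transpose_of_trivial]
  refine (PosDef.conjTranspose_mul_self _ ?_).isUnit
  rw [funext (charMatrix_mulVec c)]
  exact hc.injective_comp_right

theorem stmt17_general {N k : ℕ} (L : Matrix (Fin N) (Fin N) ℝ)
    (hLpsd : L.PosSemidef) (hL1 : L.mulVec (fun _ => 1) = 0)
    (c : Fin N → Fin k) (hc : Function.Surjective c)
    (P : Matrix (Fin N) (Fin k) ℝ)
    (hP : P = Matrix.of fun i j => if c i = j then 1 else 0)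
    (Proj : Matrix (Fin N) (Fin N) ℝ) (hProj : Proj = P * (Pᵀ * P)⁻¹ * Pᵀ)
    (LAEP : Matrix (Fin N) (Fin N) ℝ)
    (hLAEP : LAEP = Proj * L * Proj +
      ((1 : Matrix (Fin N) (Fin N) ℝ) - Proj) * L * ((1 : Matrix (Fin N) (Fin N) ℝ) - Proj)) :
    (((1 : Matrix (Fin N) (Fin N) ℝ) - Proj) * LAEP * P = 0 ∧ LAEP.IsSymm ∧
      LAEP.PosSemidef ∧ LAEP.mulVec (fun _ => 1) = 0) ∧
    ∀ X : Matrix (Fin N) (Fin N) ℝ,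
      ((1 : Matrix (Fin N) (Fin N) ℝ) - Proj) * X * P = 0 → X.IsSymm → X.PosSemidef →
      X.mulVec (fun _ => 1) = 0 → X ≠ LAEP →
      frobSq (L - LAEP) < frobSq (L - X) := by
  obtain rfl : Proj = orthogonalProjector P := hProj
  obtain rfl : LAEP = pinch (orthogonalProjector P) L := hLAEP
  have hPc : P = charMatrix c := hP
  have hPP : IsUnit (Pᵀ * P) := hPc ▸ isUnit_transpose_mul_charMatrix hc
  have hP1 : P *ᵥ (fun _ => 1) = fun _ => 1 := by rw [hPc, charMatrix_mulVec]; rfl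
  have hQ := isSymm_orthogonalProjector P
  have hQ' := isIdempotentElem_orthogonalProjector hPP
  have hQP := orthogonalProjector_mul_self hPP
  have hQ1 : orthogonalProjector P *ᵥ (fun _ => 1) = fun _ => 1 := by
    rw [← hP1, mulVec_mulVec, hQP]
  have hL : L.IsSymm := isHermitian_iff_isSymm.mp hLpsd.isHermitian
  refine ⟨⟨one_sub_mul_pinch_mul hQ' hQP L, pinch_isSymm hQ hL, hLpsd.pinch hQ,
    by rw [pinch_mulVec hQ1, hL1, mulVec_zero]⟩, ?_⟩
  intro X hXP hX _ _ hne
  have hXQ := mul_orthogonalProjector_eq_zero hXP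
  rw [frobSq_sub_eq_frobSq_sub_pinch_add hQ hQ' (pinch_eq_self hQ hX hXQ), lt_add_iff_pos_right]
  exact frobSq_pos (sub_ne_zero.mpr hne.symm)

/-- `L_AEP = 𝒫L𝒫 + (I − 𝒫)L(I − 𝒫)` is the unique minimizer of
`‖L − X‖²_F` over the feasible set. -/
theorem stmt17 {N k : ℕ} (L : Matrix (Fin N) (Fin N) ℝ)
    (hLsymm : L.IsSymm) (hLpsd : L.PosSemidef) (hL1 : L.mulVec (fun _ => 1) = 0)
    (c : Fin N → Fin k) (hc : Function.Surjective c)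
    (P : Matrix (Fin N) (Fin k) ℝ)
    (hP : P = Matrix.of fun i j => if c i = j then 1 else 0)
    (Proj : Matrix (Fin N) (Fin N) ℝ) (hProj : Proj = P * (Pᵀ * P)⁻¹ * Pᵀ)
    (LAEP : Matrix (Fin N) (Fin N) ℝ)
    (hLAEP : LAEP = Proj * L * Proj +
      ((1 : Matrix (Fin N) (Fin N) ℝ) - Proj) * L * ((1 : Matrix (Fin N) (Fin N) ℝ) - Proj)) :
    (((1 : Matrix (Fin N) (Fin N) ℝ) - Proj) * LAEP * P = 0 ∧ LAEP.IsSymm ∧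
      LAEP.PosSemidef ∧ LAEP.mulVec (fun _ => 1) = 0) ∧
    ∀ X : Matrix (Fin N) (Fin N) ℝ,
      ((1 : Matrix (Fin N) (Fin N) ℝ) - Proj) * X * P = 0 → X.IsSymm → X.PosSemidef →
      X.mulVec (fun _ => 1) = 0 → X ≠ LAEP →
      frobSq (L - LAEP) < frobSq (L - X) :=
  stmt17_general L hLpsd hL1 c hc P hP Proj hProj LAEP hLAEP
end

section
/- Let L ∈ ℝ^{N×N} be symmetric positive semidefinite with L𝟙_N = 0 and with ker L = span{𝟙_N} (i.e., L is the Laplacian of a connected weighted undirected graph), let π be a partition of {1,…,N} with characteristic matrix P, and let 𝒫 = P(PᵀP)⁻¹Pᵀ. Then the matrix L_AEP = 𝒫L𝒫 + (I_N − 𝒫)L(I_N − 𝒫) satisfies ker L_AEP = span{𝟙_N}. -/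
open Matrix Filter Topology Function
open scoped Kronecker

/-! The quadratic form of `L_AEP = 𝒫L𝒫 + (I - 𝒫)L(I - 𝒫)` at `x` is `q(𝒫x) + q((I - 𝒫)x)`,
where `q ≥ 0` is the form of `L`; so `x ∈ ker L_AEP` iff both `𝒫x` and `(I - 𝒫)x` lie in
`ker L = span{𝟙}`. As `𝒫𝟙 = 𝟙`, the idempotent `I - 𝒫` kills `𝟙` but fixes `(I - 𝒫)x`, which
forces `(I - 𝒫)x = 0` and `x = 𝒫x ∈ span{𝟙}`. -/

namespace Matrix

open Submodule

section PosSemidef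

open scoped ComplexOrder

variable {n m 𝕜 : Type*} [Fintype n] [Fintype m] [RCLike 𝕜]

theorem PosSemidef.ker_add {A B : Matrix n n 𝕜} (hA : A.PosSemidef) (hB : B.PosSemidef) :
    LinearMap.ker (A + B).mulVecLin = LinearMap.ker A.mulVecLin ⊓ LinearMap.ker B.mulVecLin := by
  ext x
  simp only [LinearMap.mem_ker, mulVecLin_apply, mem_inf]
  rw [← (hA.add hB).dotProduct_mulVec_zero_iff, ← hA.dotProduct_mulVec_zero_iff,
    ← hB.dotProduct_mulVec_zero_iff, add_mulVec, dotProduct_add]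
  exact add_eq_zero_iff_of_nonneg (hA.dotProduct_mulVec_nonneg x) (hB.dotProduct_mulVec_nonneg x)

theorem PosSemidef.ker_conjTranspose_mul_mul_same {A : Matrix n n 𝕜} (hA : A.PosSemidef)
    (B : Matrix n m 𝕜) :
    LinearMap.ker (Bᴴ * A * B).mulVecLin = (LinearMap.ker A.mulVecLin).comap B.mulVecLin := by
  ext x
  simp only [LinearMap.mem_ker, Submodule.mem_comap, mulVecLin_apply,
    ← (hA.conjTranspose_mul_mul_same B).dotProduct_mulVec_zero_iff,
    ← hA.dotProduct_mulVec_zero_iff, star_mulVec, dotProduct_mulVec, vecMul_vecMul]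

variable [DecidableEq n]

-- The paper's `L_AEP` is `pinching 𝒫 L`.
def pinching (R A : Matrix n n 𝕜) : Matrix n n 𝕜 := R * A * R + (1 - R) * A * (1 - R)

theorem PosSemidef.ker_pinching {A : Matrix n n 𝕜} (hA : A.PosSemidef) {R : Matrix n n 𝕜}
    (hRherm : R.IsHermitian) :
    LinearMap.ker (pinching R A).mulVecLin =
      (LinearMap.ker A.mulVecLin).comap R.mulVecLin ⊓
        (LinearMap.ker A.mulVecLin).comap (1 - R).mulVecLin := by
  calc LinearMap.ker (pinching R A).mulVecLin
      = LinearMap.ker (Rᴴ * A * R + (1 - R)ᴴ * A * (1 - R)).mulVecLin := by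
        rw [hRherm.eq, (isHermitian_one.sub hRherm).eq, pinching]
    _ = _ := by
        rw [(hA.conjTranspose_mul_mul_same R).ker_add (hA.conjTranspose_mul_mul_same (1 - R)),
          hA.ker_conjTranspose_mul_mul_same, hA.ker_conjTranspose_mul_mul_same]

theorem PosSemidef.ker_pinching_eq_span {A : Matrix n n 𝕜} (hA : A.PosSemidef) {v : n → 𝕜}
    (hAker : LinearMap.ker A.mulVecLin = span 𝕜 {v}) {R : Matrix n n 𝕜} (hRherm : R.IsHermitian)
    (hRidem : IsIdempotentElem R) (hRv : R *ᵥ v = v) :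
    LinearMap.ker (pinching R A).mulVecLin = span 𝕜 {v} := by
  have hQv : (1 - R) *ᵥ v = 0 := by rw [sub_mulVec, one_mulVec, hRv, sub_self]
  rw [hA.ker_pinching hRherm, hAker]
  refine le_antisymm ?_ (span_singleton_le_iff_mem _ _ |>.mpr ?_)
  · rintro x ⟨hRx, hQx⟩
    obtain ⟨a, ha⟩ := mem_span_singleton.mp (Submodule.mem_comap.mp hQx)
    rw [mulVecLin_apply] at ha
    have hQx0 : (1 - R) *ᵥ x = 0 := by
      rw [← hRidem.one_sub.eq, ← mulVec_mulVec, ← ha, mulVec_smul, hQv, smul_zero]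
    have hx : x = R *ᵥ x := by rwa [sub_mulVec, one_mulVec, sub_eq_zero] at hQx0
    exact hx ▸ hRx
  · rw [mem_inf, Submodule.mem_comap, Submodule.mem_comap, mulVecLin_apply, mulVecLin_apply, hRv,
      hQv]
    exact ⟨mem_span_singleton_self v, zero_mem _⟩

end PosSemidef

section OrthProj

variable {m k R : Type*} [Fintype m] [Fintype k] [DecidableEq k] [CommRing R]

noncomputable def orthProj (P : Matrix m k R) : Matrix m m R := P * (Pᵀ * P)⁻¹ * Pᵀ

theorem transpose_orthProj (P : Matrix m k R) : (orthProj P)ᵀ = orthProj P := by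
  rw [orthProj, transpose_mul, transpose_mul, transpose_transpose, transpose_nonsing_inv,
    transpose_mul, transpose_transpose, Matrix.mul_assoc]

variable {P : Matrix m k R} (hP : IsUnit (Pᵀ * P).det)
include hP

theorem orthProj_mul : orthProj P * P = P := by
  rw [orthProj, Matrix.mul_assoc, Matrix.mul_assoc, nonsing_inv_mul _ hP, Matrix.mul_one]

theorem isIdempotentElem_orthProj : IsIdempotentElem (orthProj P) := by
  rw [IsIdempotentElem]
  nth_rw 2 [orthProj]
  rw [← Matrix.mul_assoc, ← Matrix.mul_assoc, orthProj_mul hP, orthProj]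

end OrthProj

section Partition

open Finset

variable {m k : Type*} [DecidableEq k]

def partitionMatrix (R : Type*) [Zero R] [One R] (c : m → k) : Matrix m k R :=
  of fun i j => if c i = j then 1 else 0

variable (R : Type*) [NonAssocSemiring R]

theorem partitionMatrix_mulVec_one [Fintype k] (c : m → k) :
    partitionMatrix R c *ᵥ (fun _ => 1) = fun _ => 1 := by
  ext i
  simp [partitionMatrix, mulVec, dotProduct]

theorem transpose_partitionMatrix_mul_self [Fintype m] (c : m → k) :
    (partitionMatrix R c)ᵀ * partitionMatrix R c =
      diagonal fun j => (#{i | c i = j} : R) := by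
  ext j j'
  rw [mul_apply, diagonal_apply]
  simp only [partitionMatrix, transpose_apply, of_apply, boole_mul, ← ite_and, sum_boole]
  split_ifs with h
  · simp [h]
  · rw [filter_false_of_mem fun i _ ⟨hj, hj'⟩ => h (hj ▸ hj'), card_empty, Nat.cast_zero]

theorem isUnit_det_transpose_partitionMatrix_mul_self (K : Type*) [Field K] [CharZero K]
    [Fintype m] [Fintype k] {c : m → k} (hc : Surjective c) :
    IsUnit ((partitionMatrix K c)ᵀ * partitionMatrix K c).det := by
  rw [transpose_partitionMatrix_mul_self, det_diagonal, isUnit_iff_ne_zero, prod_ne_zero_iff]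
  intro j _
  obtain ⟨i, rfl⟩ := hc j
  exact Nat.cast_ne_zero.mpr (card_ne_zero_of_mem (mem_filter.mpr ⟨mem_univ i, rfl⟩))

end Partition

end Matrix

theorem stmt18_general {N k : ℕ} (L : Matrix (Fin N) (Fin N) ℝ)
    (hLpsd : L.PosSemidef)
    (hLker : LinearMap.ker L.mulVecLin = Submodule.span ℝ {(fun _ => 1 : Fin N → ℝ)})
    (c : Fin N → Fin k) (hc : Function.Surjective c)
    (P : Matrix (Fin N) (Fin k) ℝ)
    (hP : P = Matrix.of fun i j => if c i = j then 1 else 0)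
    (Proj : Matrix (Fin N) (Fin N) ℝ) (hProj : Proj = P * (Pᵀ * P)⁻¹ * Pᵀ)
    (LAEP : Matrix (Fin N) (Fin N) ℝ)
    (hLAEP : LAEP = Proj * L * Proj +
      ((1 : Matrix (Fin N) (Fin N) ℝ) - Proj) * L * ((1 : Matrix (Fin N) (Fin N) ℝ) - Proj)) :
    LinearMap.ker LAEP.mulVecLin = Submodule.span ℝ {(fun _ => 1 : Fin N → ℝ)} := by
  change P = partitionMatrix ℝ c at hP
  change Proj = orthProj P at hProj
  subst hP hProj hLAEP
  have hPP := isUnit_det_transpose_partitionMatrix_mul_self ℝ hc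
  have hProj1 : orthProj (partitionMatrix ℝ c) *ᵥ (fun _ => 1) = (fun _ => (1 : ℝ)) := by
    rw [← partitionMatrix_mulVec_one ℝ c, mulVec_mulVec, orthProj_mul hPP]
  have hProjHerm : (orthProj (partitionMatrix ℝ c)).IsHermitian := by
    rw [IsHermitian, conjTranspose_eq_transpose_of_trivial, transpose_orthProj]
  exact hLpsd.ker_pinching_eq_span hLker hProjHerm (isIdempotentElem_orthProj hPP) hProj1

/-- if `ker L = span{𝟙}`, then `ker L_AEP = span{𝟙}` as well. -/
theorem stmt18 {N k : ℕ} (L : Matrix (Fin N) (Fin N) ℝ)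
    (hLsymm : L.IsSymm) (hLpsd : L.PosSemidef) (hL1 : L.mulVec (fun _ => 1) = 0)
    (hLker : LinearMap.ker L.mulVecLin = Submodule.span ℝ {(fun _ => 1 : Fin N → ℝ)})
    (c : Fin N → Fin k) (hc : Function.Surjective c)
    (P : Matrix (Fin N) (Fin k) ℝ)
    (hP : P = Matrix.of fun i j => if c i = j then 1 else 0)
    (Proj : Matrix (Fin N) (Fin N) ℝ) (hProj : Proj = P * (Pᵀ * P)⁻¹ * Pᵀ)
    (LAEP : Matrix (Fin N) (Fin N) ℝ)
    (hLAEP : LAEP = Proj * L * Proj +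
      ((1 : Matrix (Fin N) (Fin N) ℝ) - Proj) * L * ((1 : Matrix (Fin N) (Fin N) ℝ) - Proj)) :
    LinearMap.ker LAEP.mulVecLin = Submodule.span ℝ {(fun _ => 1 : Fin N → ℝ)} :=
  stmt18_general L hLpsd hLker c hc P hP Proj hProj LAEP hLAEP
end
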